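/- Let P ⊆ ℝ^n be a nonempty lattice polytope, let w ∈ V(P) be a vertex, and let K_w = {w + u : ∃ ε > 0 with w + εu ∈ P} be the tangent cone of P at w. Let z ∈ (ℂ∖{0})^n be such that |z^{v−w}| < 1 for every vertex v ∈ V(P) with v ≠ w. Then (a) the family (z^m)_{m ∈ (K_w − w) ∩ ℤ^n} is absolutely summable, and (b) the sequence of finite sums Σ_{m ∈ k(P−w) ∩ ℤ^n} z^m converges, as k → ∞, to Σ_{m ∈ (K_w − w) ∩ ℤ^n} z^m. -/

import Mathlib

/-!
With `ℓ x = ∑ j, log ‖z j‖ * x j` one has `‖z^m‖ = exp (ℓ m)`, and the hypothesis says that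
`ℓ (v - w) < 0` for every other vertex `v`. By Krein–Milman `P` is the convex hull of its
vertices, so every direction of the tangent cone is a nonnegative combination of the `v - w`;
hence `-ℓ` dominates the `ℓ¹`-norm on the cone, and `‖z^m‖ ≤ r ^ ∑ j, |m j|` with `r < 1` there.
The dilates `k • (P - w)` increase (convexity and `0 ∈ P - w`) and exhaust the cone, so their
lattice-point sums are partial sums of the absolutely convergent series along an exhausting
sequence of finite sets.
-/

open scoped BigOperators Pointwise

noncomputable section

/-- Coercion of an integer lattice point to a real vector. -/
def latC {n : ℕ} (m : Fin n → ℤ) : Fin n → ℝ := fun i => (m i : ℝ)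

/-- A polytope is the convex hull of a finite set of points in `ℝ^n`. -/
def IsPolytope {n : ℕ} (S : Set (Fin n → ℝ)) : Prop :=
  ∃ F : Finset (Fin n → ℝ), S = convexHull ℝ (F : Set (Fin n → ℝ))

/-- A lattice polytope is the convex hull of finitely many lattice points. -/
def IsLatticePolytope {n : ℕ} (S : Set (Fin n → ℝ)) : Prop :=
  ∃ F : Finset (Fin n → ℤ), S = convexHull ℝ (latC '' (F : Set (Fin n → ℤ)))

/-- The integer point transform `σ_S = ∑_{m ∈ S ∩ ℤ^n} x^m ∈ ℂ[ℤ^n]`. -/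
def intPtTransform {n : ℕ} (S : Set (Fin n → ℝ)) : AddMonoidAlgebra ℂ (Fin n → ℤ) :=
  ∑ᶠ m ∈ {m : Fin n → ℤ | latC m ∈ S}, AddMonoidAlgebra.single m 1

open Filter Topology Finset

section FeasibleCone

variable {E : Type*} [AddCommGroup E] [Module ℝ E]

/-- The translate `K_w - w` of the tangent cone of `P` at `w`. -/
def feasibleCone (P : Set E) (w : E) : Set E := {x | ∃ ε : ℝ, 0 < ε ∧ w + ε • x ∈ P}

theorem Convex.smul_set_subset_smul_set {S : Set E} (hS : Convex ℝ S) (h0 : (0 : E) ∈ S)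
    {a b : ℝ} (ha : 0 ≤ a) (hab : a ≤ b) : a • S ⊆ b • S := by
  rcases ha.eq_or_lt with rfl | ha
  · rw [Set.zero_smul_set ⟨0, h0⟩]
    exact Set.zero_subset.2 (Set.zero_mem_smul_set h0)
  · calc a • S ⊆ a • ((b / a) • S) :=
          Set.smul_set_mono fun x hx => hS.mem_smul_of_zero_mem h0 hx ((one_le_div ha).2 hab)
      _ = b • S := by rw [smul_smul, mul_div_cancel₀ _ ha.ne']

theorem Convex.feasibleCone_eq_iUnion_natCast_smul {P : Set E} (hP : Convex ℝ P) {w : E}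
    (hw : w ∈ P) : feasibleCone P w = ⋃ k : ℕ, (k : ℝ) • (P - {w}) := by
  have h0 : (0 : E) ∈ P - {w} := ⟨w, hw, w, rfl, sub_self w⟩
  ext x
  simp only [feasibleCone, Set.mem_ofPred_eq, Set.mem_iUnion]
  constructor
  · rintro ⟨ε, hε, hx⟩
    have hεx : ε • x ∈ P - {w} := ⟨_, hx, w, rfl, add_sub_cancel_left w _⟩
    have hx' : x ∈ ε⁻¹ • (P - {w}) := by
      rwa [Set.mem_smul_set_iff_inv_smul_mem₀ (inv_ne_zero hε.ne'), inv_inv]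
    exact ⟨⌈ε⁻¹⌉₊, (hP.sub (convex_singleton w)).smul_set_subset_smul_set h0
      (inv_nonneg.2 hε.le) (Nat.le_ceil _) hx'⟩
  · rintro ⟨k, hk⟩
    rcases Nat.eq_zero_or_pos k with rfl | hk0
    · obtain rfl : x = 0 := by simpa using Set.zero_smul_set_subset (P - {w}) (by simpa using hk)
      exact ⟨1, one_pos, by simpa using hw⟩
    · obtain ⟨_, ⟨p, hp, _, rfl, rfl⟩, rfl⟩ := hk
      have hk0' : (0 : ℝ) < k := Nat.cast_pos.2 hk0
      refine ⟨(k : ℝ)⁻¹, inv_pos.2 hk0', ?_⟩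
      simpa [smul_smul, inv_mul_cancel₀ hk0'.ne'] using hp

theorem exists_seminorm_le_mul_neg_of_mem_feasibleCone (p : Seminorm ℝ E) (ℓ : E →ₗ[ℝ] ℝ)
    {s : Finset E} {w : E} (hℓ : ∀ y ∈ s, y ≠ w → ℓ (y - w) < 0) :
    ∃ C, 0 < C ∧ ∀ x ∈ feasibleCone (convexHull ℝ (s : Set E)) w, p x ≤ C * -ℓ x := by
  obtain ⟨C, hC, hCs⟩ : ∃ C, 0 < C ∧ ∀ y ∈ s, p (y - w) ≤ C * -ℓ (y - w) := by
    refine ((eventually_gt_atTop 0).and ((eventually_all_finset s).2 fun y hy => ?_)).exists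
    rcases eq_or_ne y w with rfl | hyw
    · simp
    · exact (tendsto_id.atTop_mul_const (neg_pos.2 (hℓ y hy hyw))).eventually_ge_atTop _
  refine ⟨C, hC, ?_⟩
  rintro x ⟨ε, hε, hx⟩
  obtain ⟨μ, hμ0, hμ1, hμx⟩ := Finset.mem_convexHull'.1 hx
  have hεx : ε • x = ∑ y ∈ s, μ y • (y - w) := by
    simp only [smul_sub, sum_sub_distrib, ← sum_smul, hμ1, one_smul, hμx, add_sub_cancel_left]
  have hℓεx : ε * ℓ x = ∑ y ∈ s, μ y * ℓ (y - w) := by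
    rw [← smul_eq_mul, ← map_smul, hεx, map_sum]
    simp only [map_smul, smul_eq_mul]
  refine le_of_mul_le_mul_left ?_ hε
  calc ε * p x = p (ε • x) := by rw [map_smul_eq_mul, Real.norm_of_nonneg hε.le]
    _ ≤ ∑ y ∈ s, p (μ y • (y - w)) :=
        hεx ▸ Finset.le_sum_of_subadditive p (map_zero p).le (map_add_le_add p) _ _
    _ = ∑ y ∈ s, μ y * p (y - w) :=
        sum_congr rfl fun y hy => by rw [map_smul_eq_mul, Real.norm_of_nonneg (hμ0 y hy)]
    _ ≤ ∑ y ∈ s, μ y * (C * -ℓ (y - w)) :=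
        sum_le_sum fun y hy => mul_le_mul_of_nonneg_left (hCs y hy) (hμ0 y hy)
    _ = ε * (C * -ℓ x) := by
        rw [show ε * (C * -ℓ x) = -C * (ε * ℓ x) by ring, hℓεx, mul_sum]
        exact sum_congr rfl fun y _ => by ring

end FeasibleCone

theorem summable_prod_pi {ι : Type*} {f : ι → ℝ} (hf : Summable f) (h0 : 0 ≤ f) :
    ∀ n : ℕ, Summable (fun m : Fin n → ι => ∏ j, f (m j))
  | 0 => .of_finite
  | n + 1 => by
    have h := hf.mul_of_nonneg (summable_prod_pi hf h0 n) h0 fun m => prod_nonneg fun j _ => h0 _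
    refine ((Fin.consEquiv fun _ => ι).symm.summable_iff.2 h).congr fun m => ?_
    simp [Fin.consEquiv, Fin.prod_univ_succ, Fin.tail]

theorem summable_exp_neg_mul_abs_int {a : ℝ} (ha : 0 < a) :
    Summable (fun k : ℤ => Real.exp (-a * |(k : ℝ)|)) := by
  have h := Real.summable_exp_nat_mul_iff.2 (neg_neg_of_pos ha)
  refine .of_nat_of_neg ?_ ?_ <;> simpa [mul_comm] using h

theorem HasSum.tendsto_finsum_mem_of_monotone {α M : Type*} [AddCommMonoid M]
    [TopologicalSpace M] {g : α → M} {C : Set α} {a : M} (hg : HasSum (fun m : C => g m) a)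
    {s : ℕ → Set α} (hmono : Monotone s) (hfin : ∀ k, (s k).Finite) (hU : ⋃ k, s k = C) :
    Tendsto (fun k => ∑ᶠ m ∈ s k, g m) atTop (𝓝 a) := by
  have hsC : ∀ k, s k ⊆ C := fun k => hU ▸ Set.subset_iUnion s k
  set T : ℕ → Finset C := fun k =>
    (hfin k).toFinset.preimage Subtype.val Subtype.val_injective.injOn
  have hT : Tendsto T atTop atTop := by
    refine tendsto_atTop_finset_of_monotone (fun k l hkl m => ?_) fun m => ?_
    · simpa [T] using @hmono k l hkl m
    · simp [T, ← Set.mem_iUnion, hU]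
  refine (hg.comp hT).congr fun k => ?_
  rw [finsum_mem_eq_finite_toFinset_sum _ (hfin k)]
  exact sum_preimage Subtype.val _ _ (fun m : α => g m) fun m hm hmC =>
    absurd (Subtype.range_coe ▸ hsC k ((hfin k).mem_toFinset.1 hm)) hmC

theorem latC_sub {n : ℕ} (a b : Fin n → ℤ) : latC (a - b) = latC a - latC b := by
  ext; simp [latC]

theorem isometry_latC {n : ℕ} : Isometry (latC : (Fin n → ℤ) → Fin n → ℝ) :=
  .piMap (fun _ => ((↑) : ℤ → ℝ)) fun _ => Real.isometry_intCast

theorem finite_setOf_latC_mem {n : ℕ} {S : Set (Fin n → ℝ)} (hS : Bornology.IsBounded S) :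
    {m : Fin n → ℤ | latC m ∈ S}.Finite :=
  (isometry_latC.antilipschitz.isBounded_preimage hS).isCompact_closure.finite_of_discrete.subset
    subset_closure

theorem summable_exp_neg_mul_sum_abs {n : ℕ} {a : ℝ} (ha : 0 < a) :
    Summable (fun m : Fin n → ℤ => Real.exp (-a * ∑ j, |(m j : ℝ)|)) := by
  simpa only [mul_sum, Real.exp_sum] using
    summable_prod_pi (summable_exp_neg_mul_abs_int ha) (fun _ => (Real.exp_pos _).le) n

def logNormForm {n : ℕ} (z : Fin n → ℂ) : (Fin n → ℝ) →ₗ[ℝ] ℝ :=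
  ∑ j, Real.log ‖z j‖ • LinearMap.proj j

@[simp]
theorem logNormForm_apply {n : ℕ} (z : Fin n → ℂ) (x : Fin n → ℝ) :
    logNormForm z x = ∑ j, Real.log ‖z j‖ * x j := by
  simp [logNormForm]

theorem norm_prod_zpow_eq_exp_logNormForm {n : ℕ} {z : Fin n → ℂ} (hz : ∀ i, z i ≠ 0)
    (m : Fin n → ℤ) : ‖∏ j, z j ^ m j‖ = Real.exp (logNormForm z (latC m)) := by
  simp only [logNormForm_apply, Real.exp_sum, norm_prod, norm_zpow, latC]
  refine prod_congr rfl fun j _ => ?_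
  rw [← Real.rpow_intCast, Real.rpow_def_of_pos (norm_pos_iff.2 (hz j))]

theorem summable_norm_prod_zpow_feasibleCone {n : ℕ} {V : Finset (Fin n → ℤ)} {w : Fin n → ℤ}
    {z : Fin n → ℂ} (hz : ∀ i, z i ≠ 0) (hlt : ∀ v ∈ V, v ≠ w → ‖∏ j, z j ^ (v j - w j)‖ < 1) :
    Summable (fun m : {m : Fin n → ℤ |
        latC m ∈ feasibleCone (convexHull ℝ (latC '' (V : Set (Fin n → ℤ)))) (latC w)} =>
      ‖∏ j, z j ^ ((m : Fin n → ℤ) j)‖) := by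
  have hℓ : ∀ y ∈ V.image latC, y ≠ latC w → logNormForm z (y - latC w) < 0 := by
    simp only [Finset.mem_image]
    rintro _ ⟨v, hv, rfl⟩ hvw
    rw [← latC_sub, ← Real.exp_lt_one_iff, ← norm_prod_zpow_eq_exp_logNormForm hz]
    exact hlt v hv (ne_of_apply_ne latC hvw)
  obtain ⟨C, hC, hcone⟩ := exists_seminorm_le_mul_neg_of_mem_feasibleCone
    (∑ j, (normSeminorm ℝ ℝ).comp (LinearMap.proj j)) _ hℓ
  refine .of_nonneg_of_le (fun _ => norm_nonneg _) (fun m => ?_)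
    ((summable_exp_neg_mul_sum_abs (inv_pos.2 hC)).subtype _)
  have hm := hcone _ (by rw [coe_image]; exact m.2)
  simp only [_root_.sum_apply, Seminorm.comp_apply, LinearMap.coe_proj, Function.eval,
    coe_normSeminorm, Real.norm_eq_abs] at hm
  rw [norm_prod_zpow_eq_exp_logNormForm hz]
  exact Real.exp_le_exp.2 (by rw [neg_mul]; exact le_neg.2 ((inv_mul_le_iff₀ hC).2 hm))

theorem IsCompact.convexHull_extremePoints_eq {E : Type*} [AddCommGroup E] [Module ℝ E]
    [TopologicalSpace E] [IsTopologicalAddGroup E] [ContinuousSMul ℝ E] [LocallyConvexSpace ℝ E]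
    [T2Space E] {P : Set E} (hcomp : IsCompact P) (hconv : Convex ℝ P)
    (hfin : (Set.extremePoints ℝ P).Finite) : convexHull ℝ (Set.extremePoints ℝ P) = P := by
  rw [← (hfin.isCompact_convexHull ℝ).isClosed.closure_eq]
  exact closure_convexHull_extremePoints hcomp hconv

theorem IsLatticePolytope.isCompact {n : ℕ} {P : Set (Fin n → ℝ)} (hP : IsLatticePolytope P) :
    IsCompact P := by
  obtain ⟨F, rfl⟩ := hP
  exact (F.finite_toSet.image latC).isCompact_convexHull ℝ

theorem IsLatticePolytope.convex {n : ℕ} {P : Set (Fin n → ℝ)} (hP : IsLatticePolytope P) :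
    Convex ℝ P := by
  obtain ⟨F, rfl⟩ := hP
  exact convex_convexHull ℝ _

theorem IsLatticePolytope.convexHull_eq_of_image_eq_extremePoints {n : ℕ}
    {P : Set (Fin n → ℝ)} (hP : IsLatticePolytope P) {V : Finset (Fin n → ℤ)}
    (hV : latC '' (V : Set (Fin n → ℤ)) = Set.extremePoints ℝ P) :
    convexHull ℝ (latC '' (V : Set (Fin n → ℤ))) = P := by
  rw [hV]
  exact hP.isCompact.convexHull_extremePoints_eq hP.convex (hV ▸ V.finite_toSet.image latC)

theorem tangent_cone_summable_and_limit_general {n : ℕ}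
    (P : Set (Fin n → ℝ)) (hPlat : IsLatticePolytope P)
    (V : Finset (Fin n → ℤ)) (hV : latC '' (V : Set (Fin n → ℤ)) = Set.extremePoints ℝ P)
    (w : Fin n → ℤ) (hw : w ∈ V)
    (z : Fin n → ℂ) (hz : ∀ i, z i ≠ 0)
    (hlt : ∀ v ∈ V, v ≠ w → ‖∏ j, z j ^ (v j - w j)‖ < 1) :
    Summable (fun m : {m : Fin n → ℤ |
        latC m ∈ {x : Fin n → ℝ | ∃ ε : ℝ, 0 < ε ∧ latC w + ε • x ∈ P}} =>
      ‖∏ j, z j ^ ((m : Fin n → ℤ) j)‖) ∧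
    Filter.Tendsto
      (fun k : ℕ =>
        ∑ᶠ m ∈ {m : Fin n → ℤ | latC m ∈ (k : ℝ) • (P - {latC w})}, ∏ j, z j ^ (m j))
      Filter.atTop
      (nhds (∑' m : {m : Fin n → ℤ |
          latC m ∈ {x : Fin n → ℝ | ∃ ε : ℝ, 0 < ε ∧ latC w + ε • x ∈ P}},
        ∏ j, z j ^ ((m : Fin n → ℤ) j))) := by
  have hwP : latC w ∈ P := extremePoints_subset (hV ▸ Set.mem_image_of_mem latC hw)
  have hsum := summable_norm_prod_zpow_feasibleCone (w := w) hz hlt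
  rw [hPlat.convexHull_eq_of_image_eq_extremePoints hV] at hsum
  refine ⟨hsum, HasSum.tendsto_finsum_mem_of_monotone
    (g := fun m : Fin n → ℤ => ∏ j, z j ^ m j) hsum.of_norm.hasSum
    (fun k l hkl => Set.preimage_mono ?_) (fun k => finite_setOf_latC_mem ?_) ?_⟩
  · exact (hPlat.convex.sub (convex_singleton _)).smul_set_subset_smul_set
      ⟨_, hwP, _, rfl, sub_self _⟩ (Nat.cast_nonneg k) (Nat.cast_le.2 hkl)
  · exact (hPlat.isCompact.isBounded.sub Bornology.isBounded_singleton).smul₀ (k : ℝ)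
  · change ⋃ k : ℕ, latC ⁻¹' _ = latC ⁻¹' _
    rw [← Set.preimage_iUnion, ← hPlat.convex.feasibleCone_eq_iUnion_natCast_smul hwP]

theorem tangent_cone_summable_and_limit {n : ℕ}
    (P : Set (Fin n → ℝ)) (hPlat : IsLatticePolytope P) (hPne : P.Nonempty)
    (V : Finset (Fin n → ℤ)) (hV : latC '' (V : Set (Fin n → ℤ)) = Set.extremePoints ℝ P)
    (w : Fin n → ℤ) (hw : w ∈ V)
    (z : Fin n → ℂ) (hz : ∀ i, z i ≠ 0)
    (hlt : ∀ v ∈ V, v ≠ w → ‖∏ j, z j ^ (v j - w j)‖ < 1) :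
    Summable (fun m : {m : Fin n → ℤ |
        latC m ∈ {x : Fin n → ℝ | ∃ ε : ℝ, 0 < ε ∧ latC w + ε • x ∈ P}} =>
      ‖∏ j, z j ^ ((m : Fin n → ℤ) j)‖) ∧
    Filter.Tendsto
      (fun k : ℕ =>
        ∑ᶠ m ∈ {m : Fin n → ℤ | latC m ∈ (k : ℝ) • (P - {latC w})}, ∏ j, z j ^ (m j))
      Filter.atTop
      (nhds (∑' m : {m : Fin n → ℤ |
          latC m ∈ {x : Fin n → ℝ | ∃ ε : ℝ, 0 < ε ∧ latC w + ε • x ∈ P}},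
        ∏ j, z j ^ ((m : Fin n → ℤ) j))) :=
  tangent_cone_summable_and_limit_general P hPlat V hV w hw z hz hlt
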